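/- arXiv:0709.2337 — 2 statements merged into one kernel-verified Lean document; each statement's English description precedes it below -/
import Mathlib

section
/- Let Ω ⊆ ℝ² be open, ν : Ω → ℝ, and let f : Ω → ℝ be a positive twice continuously differentiable solution of f_xx − f_tt = νf on Ω. Let W = u + jv : Ω → 𝔻 be twice continuously differentiable and satisfy the main Vekua equation W_z̄ = (f_z̄/f)·W̄ on Ω. Then u = Re W satisfies the Klein-Gordon equation u_xx − u_tt = νu on Ω, and v = Im W satisfies v_xx − v_tt = ηv on Ω, where η = −ν + 8|f_z|²/f² = −ν + 2(f_x² − f_t²)/f². -/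
noncomputable section

open Filter Topology MeasureTheory

/-- Hyperbolic (duplex) numbers 𝔻, modeled as pairs `(Re z, Im z)` with `j ^ 2 = 1`. -/
abbrev Hyp : Type := ℝ × ℝ

/-- Real part of a hyperbolic number. -/
def hre (a : Hyp) : ℝ := a.1

/-- Imaginary part of a hyperbolic number. -/
def him (a : Hyp) : ℝ := a.2

/-- The hyperbolic imaginary unit `j`. -/
def hj : Hyp := (0, 1)

/-- Hyperbolic multiplication: `(x+tj)(x'+t'j) = (xx'+tt') + (xt'+tx')j`. -/
def hmul (a b : Hyp) : Hyp := (a.1 * b.1 + a.2 * b.2, a.1 * b.2 + a.2 * b.1)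

/-- Hyperbolic conjugation: `conj (x+tj) = x - tj`. -/
def hconj (a : Hyp) : Hyp := (a.1, -a.2)

/-- Invertibility of a hyperbolic number: `x² ≠ t²`. -/
def IsInv (a : Hyp) : Prop := a.1 ^ 2 ≠ a.2 ^ 2

/-- Hyperbolic inverse `z⁻¹ = z̄ / |z|²` with `|z|² = x² - t²`. -/
def hinv (a : Hyp) : Hyp := (a.1 / (a.1 ^ 2 - a.2 ^ 2), -a.2 / (a.1 ^ 2 - a.2 ^ 2))

/-- Hyperbolic division. -/
def hdiv (a b : Hyp) : Hyp := hmul a (hinv b)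

/-- Partial derivative in the first (`x`) variable. -/
def pdx (g : Hyp → ℝ) (p : Hyp) : ℝ := deriv (fun s => g (s, p.2)) p.1

/-- Partial derivative in the second (`t`) variable. -/
def pdt (g : Hyp → ℝ) (p : Hyp) : ℝ := deriv (fun s => g (p.1, s)) p.2

/-- The wave operator `□g = g_xx - g_tt`. -/
def waveOp (g : Hyp → ℝ) (p : Hyp) : ℝ := pdx (pdx g) p - pdt (pdt g) p

/-- `w_z = ½(∂_x + j ∂_t) w = ½((u_x+v_t) + (v_x+u_t)j)` for a 𝔻-valued `w = u + jv`. -/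
def dz (w : Hyp → Hyp) (p : Hyp) : Hyp :=
  ((pdx (fun q => (w q).1) p + pdt (fun q => (w q).2) p) / 2,
   (pdx (fun q => (w q).2) p + pdt (fun q => (w q).1) p) / 2)

/-- `w_z̄ = ½(∂_x - j ∂_t) w = ½((u_x-v_t) + (v_x-u_t)j)` for a 𝔻-valued `w = u + jv`. -/
def dzbar (w : Hyp → Hyp) (p : Hyp) : Hyp :=
  ((pdx (fun q => (w q).1) p - pdt (fun q => (w q).2) p) / 2,
   (pdx (fun q => (w q).2) p - pdt (fun q => (w q).1) p) / 2)

/-- `f_z = ½(f_x + j f_t)` for a real-valued `f`. -/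
def rz (f : Hyp → ℝ) (p : Hyp) : Hyp := (pdx f p / 2, pdt f p / 2)

/-- `f_z̄ = ½(f_x - j f_t)` for a real-valued `f`. -/
def rzbar (f : Hyp → ℝ) (p : Hyp) : Hyp := (pdx f p / 2, -(pdt f p) / 2)

/-- 𝔻-differentiability at `z₀`: the difference quotient `(f z - f z₀)·(z - z₀)⁻¹`
tends to `d` as `z → z₀` through points with `z - z₀` invertible. -/
def HasHDerivAt (f : Hyp → Hyp) (d : Hyp) (z₀ : Hyp) : Prop :=
  Filter.Tendsto (fun z => hmul (f z - f z₀) (hinv (z - z₀)))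
    (nhdsWithin z₀ {z | IsInv (z - z₀)}) (nhds d)

/-- `F Ḡ - F̄ G`. -/
def pairDenom (F G : Hyp → Hyp) (z : Hyp) : Hyp :=
  hmul (F z) (hconj (G z)) - hmul (hconj (F z)) (G z)

/-- Characteristic coefficient `a_(F,G) = -(F̄ G_z̄ - F_z̄ Ḡ)/(F Ḡ - F̄ G)`. -/
def aFG (F G : Hyp → Hyp) (z : Hyp) : Hyp :=
  - hdiv (hmul (hconj (F z)) (dzbar G z) - hmul (dzbar F z) (hconj (G z))) (pairDenom F G z)

/-- Characteristic coefficient `b_(F,G) = (F G_z̄ - F_z̄ G)/(F Ḡ - F̄ G)`. -/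
def bFG (F G : Hyp → Hyp) (z : Hyp) : Hyp :=
  hdiv (hmul (F z) (dzbar G z) - hmul (dzbar F z) (G z)) (pairDenom F G z)

/-- Characteristic coefficient `A_(F,G) = -(F̄ G_z - F_z Ḡ)/(F Ḡ - F̄ G)`. -/
def AFG (F G : Hyp → Hyp) (z : Hyp) : Hyp :=
  - hdiv (hmul (hconj (F z)) (dz G z) - hmul (dz F z) (hconj (G z))) (pairDenom F G z)

/-- Characteristic coefficient `B_(F,G) = (F G_z - F_z G)/(F Ḡ - F̄ G)`. -/
def BFG (F G : Hyp → Hyp) (z : Hyp) : Hyp :=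
  hdiv (hmul (F z) (dz G z) - hmul (dz F z) (G z)) (pairDenom F G z)

/-- A generating pair on `Ω`: twice continuously differentiable `F, G` with `Im(F̄G) ≠ 0`. -/
def IsGenPair (F G : Hyp → Hyp) (Ω : Set Hyp) : Prop :=
  ContDiffOn ℝ 2 F Ω ∧ ContDiffOn ℝ 2 G Ω ∧ ∀ z ∈ Ω, him (hmul (hconj (F z)) (G z)) ≠ 0

/-- The idempotent `e₁ = (1+j)/2`. -/
def e1 : Hyp := (1/2, 1/2)

/-- The idempotent `e₂ = (1-j)/2`. -/
def e2 : Hyp := (1/2, -1/2)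

/-- Contour integral `∮_{∂R} h dz` over the counterclockwise boundary of the rectangle
`[x₁,x₂] × [t₁,t₂]`, with hyperbolic multiplication (`dz = dx` on horizontal sides,
`dz = j dt` on vertical sides). -/
def rectContourInt (h : Hyp → Hyp) (x₁ x₂ t₁ t₂ : ℝ) : Hyp :=
  ((∫ x in x₁..x₂, h (x, t₁)) - ∫ x in x₁..x₂, h (x, t₂)) +
    hmul hj ((∫ t in t₁..t₂, h (x₂, t)) - ∫ t in t₁..t₂, h (x₁, t))

/-- Integral `∫_{[z₀,z]} h dζ` along the straight segment from `z₀` to `z`,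
with hyperbolic multiplication. -/
def segInt (h : Hyp → Hyp) (z₀ z : Hyp) : Hyp :=
  ∫ s in (0:ℝ)..1, hmul (h (z₀ + s • (z - z₀))) (z - z₀)

/-- Natural powers in 𝔻. -/
def hpow (a : Hyp) : ℕ → Hyp
  | 0 => (1, 0)
  | n + 1 => hmul a (hpow a n)

/-- Integer powers in 𝔻 (for invertible base). -/
def hzpow (a : Hyp) : ℤ → Hyp
  | Int.ofNat n => hpow a n
  | Int.negSucc n => hinv (hpow a (n + 1))

/-! The main Vekua equation, written in real components, is the first-order system
`f (u_x - v_t) = f_x u + f_t v`, `f (u_t - v_x) = f_x v + f_t u`. Differentiating each equation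
in `x` and in `t` and cancelling the mixed second derivatives (Schwarz) expresses `f □u` through
`□f = ν f`, giving `□u = ν u`; for `v` the remaining first derivatives of `u` and `v` are
eliminated by the system itself, which produces the extra term `2 (f_x² - f_t²) / f²`. -/

section PartialDerivatives

variable {Ω : Set Hyp} {g a b : Hyp → ℝ} {p : Hyp}

lemma DifferentiableAt.hasDerivAt_pdx (hg : DifferentiableAt ℝ g p) :
    HasDerivAt (fun s => g (s, p.2)) (pdx g p) p.1 :=
  (hg.comp p.1 (differentiableAt_id.prodMk (differentiableAt_const p.2))).hasDerivAt

lemma DifferentiableAt.hasDerivAt_pdt (hg : DifferentiableAt ℝ g p) :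
    HasDerivAt (fun s => g (p.1, s)) (pdt g p) p.2 :=
  (hg.comp p.2 ((differentiableAt_const p.1).prodMk differentiableAt_id)).hasDerivAt

lemma pdx_eq_fderiv (hg : DifferentiableAt ℝ g p) : pdx g p = fderiv ℝ g p (1, 0) :=
  (hg.hasFDerivAt.comp_hasDerivAt p.1
    ((hasDerivAt_id p.1).prodMk (hasDerivAt_const p.1 p.2))).deriv

lemma pdt_eq_fderiv (hg : DifferentiableAt ℝ g p) : pdt g p = fderiv ℝ g p (0, 1) :=
  (hg.hasFDerivAt.comp_hasDerivAt p.2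
    ((hasDerivAt_const p.2 p.1).prodMk (hasDerivAt_id p.2))).deriv

lemma pdx_add (ha : DifferentiableAt ℝ a p) (hb : DifferentiableAt ℝ b p) :
    pdx (fun q => a q + b q) p = pdx a p + pdx b p :=
  (ha.hasDerivAt_pdx.add hb.hasDerivAt_pdx).deriv

lemma pdt_add (ha : DifferentiableAt ℝ a p) (hb : DifferentiableAt ℝ b p) :
    pdt (fun q => a q + b q) p = pdt a p + pdt b p :=
  (ha.hasDerivAt_pdt.add hb.hasDerivAt_pdt).deriv

lemma pdx_sub (ha : DifferentiableAt ℝ a p) (hb : DifferentiableAt ℝ b p) :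
    pdx (fun q => a q - b q) p = pdx a p - pdx b p :=
  (ha.hasDerivAt_pdx.sub hb.hasDerivAt_pdx).deriv

lemma pdt_sub (ha : DifferentiableAt ℝ a p) (hb : DifferentiableAt ℝ b p) :
    pdt (fun q => a q - b q) p = pdt a p - pdt b p :=
  (ha.hasDerivAt_pdt.sub hb.hasDerivAt_pdt).deriv

lemma pdx_mul (ha : DifferentiableAt ℝ a p) (hb : DifferentiableAt ℝ b p) :
    pdx (fun q => a q * b q) p = pdx a p * b p + a p * pdx b p :=
  (ha.hasDerivAt_pdx.mul hb.hasDerivAt_pdx).deriv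

lemma pdt_mul (ha : DifferentiableAt ℝ a p) (hb : DifferentiableAt ℝ b p) :
    pdt (fun q => a q * b q) p = pdt a p * b p + a p * pdt b p :=
  (ha.hasDerivAt_pdt.mul hb.hasDerivAt_pdt).deriv

lemma pdx_congr (h : a =ᶠ[𝓝 p] b) : pdx a p = pdx b p :=
  EventuallyEq.deriv_eq
    (((by fun_prop : Continuous fun s : ℝ => ((s, p.2) : Hyp)).tendsto p.1).eventually h)

lemma pdt_congr (h : a =ᶠ[𝓝 p] b) : pdt a p = pdt b p :=
  EventuallyEq.deriv_eq
    (((by fun_prop : Continuous fun s : ℝ => ((p.1, s) : Hyp)).tendsto p.2).eventually h)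

lemma ContDiffOn.differentiableAt_of_isOpen {n : WithTop ℕ∞} (hg : ContDiffOn ℝ n g Ω)
    (hΩ : IsOpen Ω) (hn : n ≠ 0) (hp : p ∈ Ω) : DifferentiableAt ℝ g p :=
  (hg.differentiableOn hn).differentiableAt (hΩ.mem_nhds hp)

lemma ContDiffOn.pdx {n : WithTop ℕ∞} (hg : ContDiffOn ℝ (n + 1) g Ω) (hΩ : IsOpen Ω) :
    ContDiffOn ℝ n (pdx g) Ω :=
  ((hg.fderiv_of_isOpen hΩ le_rfl).clm_apply contDiffOn_const).congr fun _ hq =>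
    pdx_eq_fderiv (hg.differentiableAt_of_isOpen hΩ (by simp) hq)

lemma ContDiffOn.pdt {n : WithTop ℕ∞} (hg : ContDiffOn ℝ (n + 1) g Ω) (hΩ : IsOpen Ω) :
    ContDiffOn ℝ n (pdt g) Ω :=
  ((hg.fderiv_of_isOpen hΩ le_rfl).clm_apply contDiffOn_const).congr fun _ hq =>
    pdt_eq_fderiv (hg.differentiableAt_of_isOpen hΩ (by simp) hq)

end PartialDerivatives

section SecondOrder

variable {Ω : Set Hyp} {p : Hyp}

lemma pdt_pdx_comm {g : Hyp → ℝ} (hΩ : IsOpen Ω) (hg : ContDiffOn ℝ 2 g Ω)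
    (hp : p ∈ Ω) : pdt (pdx g) p = pdx (pdt g) p := by
  have hgp : ContDiffAt ℝ 2 g p := hg.contDiffAt (hΩ.mem_nhds hp)
  have hd : ∀ᶠ q in 𝓝 p, DifferentiableAt ℝ g q := by
    filter_upwards [hΩ.mem_nhds hp] with q hq
    exact hg.differentiableAt_of_isOpen hΩ two_ne_zero hq
  have hx : pdx g =ᶠ[𝓝 p] fun q => fderiv ℝ g q (1, 0) := hd.mono fun _ => pdx_eq_fderiv
  have ht : pdt g =ᶠ[𝓝 p] fun q => fderiv ℝ g q (0, 1) := hd.mono fun _ => pdt_eq_fderiv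
  have fderiv_apply_const (v w : Hyp) :
      fderiv ℝ (fun q => fderiv ℝ g q v) p w = fderiv ℝ (fderiv ℝ g) p w v := by
    have hd2 := (hgp.fderiv_right (m := 1) le_rfl).differentiableAt one_ne_zero
    simp [fderiv_clm_apply hd2 (differentiableAt_const v)]
  rw [pdt_eq_fderiv ((hg.pdx hΩ).differentiableAt_of_isOpen hΩ one_ne_zero hp),
    pdx_eq_fderiv ((hg.pdt hΩ).differentiableAt_of_isOpen hΩ one_ne_zero hp),
    hx.fderiv_eq, ht.fderiv_eq, fderiv_apply_const, fderiv_apply_const]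
  exact hgp.isSymmSndFDerivAt (by simp) _ _

variable {f a b c d : Hyp → ℝ}

lemma pdx_of_mul_sub_eq (hΩ : IsOpen Ω) (hf : ContDiffOn ℝ 2 f Ω)
    (ha : ContDiffOn ℝ 1 a Ω) (hb : ContDiffOn ℝ 1 b Ω) (hc : ContDiffOn ℝ 1 c Ω)
    (hd : ContDiffOn ℝ 1 d Ω)
    (h : ∀ q ∈ Ω, f q * (a q - b q) = pdx f q * c q + pdt f q * d q) (hp : p ∈ Ω) :
    pdx f p * (a p - b p) + f p * (pdx a p - pdx b p) =
      pdx (pdx f) p * c p + pdx f p * pdx c p + (pdx (pdt f) p * d p + pdt f p * pdx d p) := by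
  have D {g : Hyp → ℝ} (hg : ContDiffOn ℝ 1 g Ω) : DifferentiableAt ℝ g p :=
    hg.differentiableAt_of_isOpen hΩ one_ne_zero hp
  have hfx := D (hf.pdx hΩ)
  have hft := D (hf.pdt hΩ)
  have h' := pdx_congr (eventually_of_mem (hΩ.mem_nhds hp) h)
  rwa [pdx_mul (D (hf.of_le one_le_two)) ((D ha).fun_sub (D hb)), pdx_sub (D ha) (D hb),
    pdx_add (hfx.fun_mul (D hc)) (hft.fun_mul (D hd)), pdx_mul hfx (D hc),
    pdx_mul hft (D hd)] at h'

lemma pdt_of_mul_sub_eq (hΩ : IsOpen Ω) (hf : ContDiffOn ℝ 2 f Ω)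
    (ha : ContDiffOn ℝ 1 a Ω) (hb : ContDiffOn ℝ 1 b Ω) (hc : ContDiffOn ℝ 1 c Ω)
    (hd : ContDiffOn ℝ 1 d Ω)
    (h : ∀ q ∈ Ω, f q * (a q - b q) = pdx f q * c q + pdt f q * d q) (hp : p ∈ Ω) :
    pdt f p * (a p - b p) + f p * (pdt a p - pdt b p) =
      pdt (pdx f) p * c p + pdx f p * pdt c p + (pdt (pdt f) p * d p + pdt f p * pdt d p) := by
  have D {g : Hyp → ℝ} (hg : ContDiffOn ℝ 1 g Ω) : DifferentiableAt ℝ g p :=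
    hg.differentiableAt_of_isOpen hΩ one_ne_zero hp
  have hfx := D (hf.pdx hΩ)
  have hft := D (hf.pdt hΩ)
  have h' := pdt_congr (eventually_of_mem (hΩ.mem_nhds hp) h)
  rwa [pdt_mul (D (hf.of_le one_le_two)) ((D ha).fun_sub (D hb)), pdt_sub (D ha) (D hb),
    pdt_add (hfx.fun_mul (D hc)) (hft.fun_mul (D hd)), pdt_mul hfx (D hc),
    pdt_mul hft (D hd)] at h'

end SecondOrder

/-- The main Vekua equation `W_z̄ = (f_z̄ / f) W̄` for `W = u + jv`, in real components and
multiplied by `2f`. -/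
def MainVekuaSystem (Ω : Set Hyp) (f u v : Hyp → ℝ) : Prop :=
  ∀ q ∈ Ω, f q * (pdx u q - pdt v q) = pdx f q * u q + pdt f q * v q ∧
    f q * (pdt u q - pdx v q) = pdx f q * v q + pdt f q * u q

namespace MainVekuaSystem

variable {Ω : Set Hyp} {ν f u v : Hyp → ℝ} {p : Hyp}

lemma of_dzbar_eq {W : Hyp → Hyp} (hf : ∀ p ∈ Ω, f p ≠ 0)
    (h : ∀ p ∈ Ω, dzbar W p = hmul (hdiv (rzbar f p) (f p, 0)) (hconj (W p))) :
    MainVekuaSystem Ω f (fun q => (W q).1) (fun q => (W q).2) := by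
  intro p hp
  have hfp := hf p hp
  have hp' := h p hp
  simp only [dzbar, hdiv, hmul, hinv, rzbar, hconj, Prod.mk.injEq] at hp'
  obtain ⟨hre, him⟩ := hp'
  field_simp at hre him
  refine ⟨mul_left_cancel₀ hfp ?_, mul_left_cancel₀ hfp ?_⟩
  · linear_combination hre
  · linear_combination -him

theorem waveOp_fst (hsys : MainVekuaSystem Ω f u v) (hΩ : IsOpen Ω)
    (hf : ContDiffOn ℝ 2 f Ω) (hu : ContDiffOn ℝ 2 u Ω) (hv : ContDiffOn ℝ 2 v Ω)
    (hp : p ∈ Ω) (hfp : f p ≠ 0) (hKG : waveOp f p = ν p * f p) :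
    waveOp u p = ν p * u p := by
  have hx := pdx_of_mul_sub_eq hΩ hf (hu.pdx hΩ) (hv.pdt hΩ) (hu.of_le one_le_two)
    (hv.of_le one_le_two) (fun q hq => (hsys q hq).1) hp
  have ht := pdt_of_mul_sub_eq hΩ hf (hu.pdt hΩ) (hv.pdx hΩ) (hv.of_le one_le_two)
    (hu.of_le one_le_two) (fun q hq => (hsys q hq).2) hp
  have hfxt := pdt_pdx_comm hΩ hf hp
  have hvxt := pdt_pdx_comm hΩ hv hp
  unfold waveOp at hKG ⊢
  refine mul_left_cancel₀ hfp ?_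
  linear_combination hx - ht + u p * hKG - v p * hfxt - f p * hvxt

theorem waveOp_snd (hsys : MainVekuaSystem Ω f u v) (hΩ : IsOpen Ω)
    (hf : ContDiffOn ℝ 2 f Ω) (hu : ContDiffOn ℝ 2 u Ω) (hv : ContDiffOn ℝ 2 v Ω)
    (hp : p ∈ Ω) (hfp : f p ≠ 0) (hKG : waveOp f p = ν p * f p) :
    waveOp v p = (-ν p + 2 * ((pdx f p) ^ 2 - (pdt f p) ^ 2) / (f p) ^ 2) * v p := by
  have ht := pdt_of_mul_sub_eq hΩ hf (hu.pdx hΩ) (hv.pdt hΩ) (hu.of_le one_le_two)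
    (hv.of_le one_le_two) (fun q hq => (hsys q hq).1) hp
  have hx := pdx_of_mul_sub_eq hΩ hf (hu.pdt hΩ) (hv.pdx hΩ) (hv.of_le one_le_two)
    (hu.of_le one_le_two) (fun q hq => (hsys q hq).2) hp
  have hfxt := pdt_pdx_comm hΩ hf hp
  have huxt := pdt_pdx_comm hΩ hu hp
  obtain ⟨hre, him⟩ := hsys p hp
  unfold waveOp at hKG ⊢
  field_simp
  linear_combination f p * (ht - hx) + 2 * pdx f p * him - 2 * pdt f p * hre
    - f p * v p * hKG + f p * u p * hfxt - f p ^ 2 * huxt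

end MainVekuaSystem

/-- if `f > 0` is a C² solution of `□f = νf` and `W = u + jv ∈ C²(Ω)` solves
the main Vekua equation `W_z̄ = (f_z̄/f)W̄`, then `u = Re W` solves `□u = νu` and
`v = Im W` solves `□v = ηv` with `η = −ν + 8|f_z|²/f² = −ν + 2(f_x² − f_t²)/f²`. -/
theorem mainVekua_re_im_solve_kleinGordon (Ω : Set Hyp) (hΩ : IsOpen Ω) (ν f : Hyp → ℝ)
    (hf : ContDiffOn ℝ 2 f Ω) (hfpos : ∀ p ∈ Ω, 0 < f p)
    (hKG : ∀ p ∈ Ω, waveOp f p = ν p * f p)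
    (W : Hyp → Hyp) (hW : ContDiffOn ℝ 2 W Ω)
    (hMainVekua : ∀ p ∈ Ω, dzbar W p = hmul (hdiv (rzbar f p) (f p, 0)) (hconj (W p))) :
    ∀ p ∈ Ω,
      waveOp (fun q => (W q).1) p = ν p * (W p).1 ∧
      waveOp (fun q => (W q).2) p =
        (-ν p + 2 * ((pdx f p) ^ 2 - (pdt f p) ^ 2) / (f p) ^ 2) * (W p).2 := by
  intro p hp
  have hf0 : ∀ q ∈ Ω, f q ≠ 0 := fun q hq => (hfpos q hq).ne'
  have hsys := MainVekuaSystem.of_dzbar_eq hf0 hMainVekua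
  have hu : ContDiffOn ℝ 2 (fun q => (W q).1) Ω := contDiff_fst.comp_contDiffOn hW
  have hv : ContDiffOn ℝ 2 (fun q => (W q).2) Ω := contDiff_snd.comp_contDiffOn hW
  exact ⟨hsys.waveOp_fst hΩ hf hu hv hp (hf0 p hp) (hKG p hp),
    hsys.waveOp_snd hΩ hf hu hv hp (hf0 p hp) (hKG p hp)⟩
end
end

section
/- Let Ω ⊆ ℝ² be open and let ρ : Ω → ℝ be twice continuously differentiable with ρ_x² − ρ_t² ≠ 0 on Ω. Suppose there is a continuously differentiable function s : ℝ → ℝ such that s(ρ(x,t)) = (ρ_xx − ρ_tt)/(ρ_x² − ρ_t²) on Ω (note 4|ρ_z|² = ρ_x² − ρ_t²), and let S : ℝ → ℝ be an antiderivative of s. Then the 𝔻-valued function Φ = j·e^{−S(ρ)}·ρ_z, i.e. Φ(x,t) = j·e^{−S(ρ(x,t))}·½(ρ_x + jρ_t), satisfies ∂_z̄Φ = 0 on Ω (Φ is hyperbolic analytic). -/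
noncomputable section

open Filter Topology MeasureTheory

/- Write `E = e^{-S(ρ)}`, so that `E_x = -s(ρ) ρ_x E` and `E_t = -s(ρ) ρ_t E`. For
`Φ = (E ρ_t / 2, E ρ_x / 2)` the two components of `4 ∂_z̄Φ` are
`(E ρ_t)_x - (E ρ_x)_t = E (ρ_tx - ρ_xt)`, which vanishes by the symmetry of second derivatives, and
`(E ρ_x)_x - (E ρ_t)_t = E (□ρ - s(ρ) (ρ_x² - ρ_t²))`, which vanishes by the hypothesis on `s`. -/

section PartialDerivatives

variable {g : Hyp → ℝ} {L : Hyp →L[ℝ] ℝ} {p : Hyp}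

lemma HasFDerivAt.pdx_eq (h : HasFDerivAt g L p) : pdx g p = L (1, 0) :=
  (h.comp_hasDerivAt p.1 ((hasDerivAt_id p.1).prodMk (hasDerivAt_const p.1 p.2))).deriv

lemma HasFDerivAt.pdt_eq (h : HasFDerivAt g L p) : pdt g p = L (0, 1) :=
  (h.comp_hasDerivAt p.2 ((hasDerivAt_const p.2 p.1).prodMk (hasDerivAt_id p.2))).deriv

lemma ContDiffAt.hasFDerivAt_fderiv_apply (h : ContDiffAt ℝ 2 g p) (v : Hyp) :
    HasFDerivAt (fun q => fderiv ℝ g q v)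
      ((ContinuousLinearMap.apply ℝ ℝ v).comp (fderiv ℝ (fderiv ℝ g) p)) p :=
  (ContinuousLinearMap.apply ℝ ℝ v).hasFDerivAt.comp p
    ((h.fderiv_right (by norm_num)).differentiableAt one_ne_zero).hasFDerivAt

lemma ContDiffAt.pdx_eventuallyEq (h : ContDiffAt ℝ 2 g p) :
    pdx g =ᶠ[𝓝 p] fun q => fderiv ℝ g q (1, 0) := by
  filter_upwards [h.eventually (by simp)] with q hq
  exact (hq.differentiableAt (by norm_num)).hasFDerivAt.pdx_eq

lemma ContDiffAt.pdt_eventuallyEq (h : ContDiffAt ℝ 2 g p) :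
    pdt g =ᶠ[𝓝 p] fun q => fderiv ℝ g q (0, 1) := by
  filter_upwards [h.eventually (by simp)] with q hq
  exact (hq.differentiableAt (by norm_num)).hasFDerivAt.pdt_eq

lemma ContDiffAt.hasFDerivAt_pdx (h : ContDiffAt ℝ 2 g p) :
    HasFDerivAt (pdx g) ((ContinuousLinearMap.apply ℝ ℝ (1, 0)).comp (fderiv ℝ (fderiv ℝ g) p)) p :=
  (h.hasFDerivAt_fderiv_apply _).congr_of_eventuallyEq h.pdx_eventuallyEq

lemma ContDiffAt.hasFDerivAt_pdt (h : ContDiffAt ℝ 2 g p) :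
    HasFDerivAt (pdt g) ((ContinuousLinearMap.apply ℝ ℝ (0, 1)).comp (fderiv ℝ (fderiv ℝ g) p)) p :=
  (h.hasFDerivAt_fderiv_apply _).congr_of_eventuallyEq h.pdt_eventuallyEq

end PartialDerivatives

/-- `Φ = j·e^{-S(ρ)}·ρ_z`, multiplied out in components. -/
def phi (S : ℝ → ℝ) (ρ : Hyp → ℝ) (q : Hyp) : Hyp :=
  (Real.exp (-S (ρ q)) * (pdt ρ q / 2), Real.exp (-S (ρ q)) * (pdx ρ q / 2))

lemma dzbar_phi_eq_zero {ρ : Hyp → ℝ} {S : ℝ → ℝ} {c : ℝ} {p : Hyp}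
    (hρ : ContDiffAt ℝ 2 ρ p) (hS : HasDerivAt S c (ρ p))
    (hc : c * (pdx ρ p ^ 2 - pdt ρ p ^ 2) = waveOp ρ p) :
    dzbar (phi S ρ) p = 0 := by
  have hρ' := (hρ.differentiableAt (by norm_num)).hasFDerivAt
  set Q := fderiv ℝ (fderiv ℝ ρ) p
  have hE : HasFDerivAt (fun q => Real.exp (-S (ρ q))) _ p := (hS.comp_hasFDerivAt p hρ').neg.exp
  have hu : HasFDerivAt (fun q => Real.exp (-S (ρ q)) * (pdt ρ q * 2⁻¹)) _ p :=
    hE.mul (hρ.hasFDerivAt_pdt.mul_const 2⁻¹)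
  have hv : HasFDerivAt (fun q => Real.exp (-S (ρ q)) * (pdx ρ q * 2⁻¹)) _ p :=
    hE.mul (hρ.hasFDerivAt_pdx.mul_const 2⁻¹)
  have hsymm : Q (1, 0) (0, 1) = Q (0, 1) (1, 0) := hρ.isSymmSndFDerivAt (by simp) _ _
  have hwave : waveOp ρ p = Q (1, 0) (1, 0) - Q (0, 1) (0, 1) := by
    rw [waveOp, hρ.hasFDerivAt_pdx.pdx_eq, hρ.hasFDerivAt_pdt.pdt_eq]
    rfl
  rw [hwave] at hc
  simp only [dzbar, phi, div_eq_mul_inv]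
  rw [hu.pdx_eq, hu.pdt_eq, hv.pdx_eq, hv.pdt_eq]
  simp only [Pi.neg_apply, Function.comp_apply, smul_neg, add_apply, smul_apply, neg_apply,
    ContinuousLinearMap.comp_apply, ContinuousLinearMap.apply_apply, smul_eq_mul,
    ← hρ'.pdx_eq, ← hρ'.pdt_eq, Prod.mk_eq_zero]
  constructor
  · linear_combination (Real.exp (-S (ρ p)) / 4) * hsymm
  · linear_combination (-Real.exp (-S (ρ p)) / 4) * hc

theorem Phi_is_hyperbolic_analytic_general (Ω : Set Hyp) (hΩ : IsOpen Ω)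
    (ρ : Hyp → ℝ) (hρ : ContDiffOn ℝ 2 ρ Ω)
    (hnd : ∀ p ∈ Ω, (pdx ρ p) ^ 2 - (pdt ρ p) ^ 2 ≠ 0)
    (s S : ℝ → ℝ)
    (hsρ : ∀ p ∈ Ω, s (ρ p) = waveOp ρ p / ((pdx ρ p) ^ 2 - (pdt ρ p) ^ 2))
    (hS : ∀ x : ℝ, HasDerivAt S (s x) x)
    (Φ : Hyp → Hyp)
    (hΦ : ∀ p, Φ p = ((Real.exp (-S (ρ p)) * (pdt ρ p / 2),
      Real.exp (-S (ρ p)) * (pdx ρ p / 2)) : Hyp)) :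
    ∀ p ∈ Ω, dzbar Φ p = 0 := by
  intro p hp
  obtain rfl : Φ = phi S ρ := funext hΦ
  refine dzbar_phi_eq_zero (hρ.contDiffAt (hΩ.mem_nhds hp)) (hS (ρ p)) ?_
  rw [hsρ p hp, div_mul_cancel₀ _ (hnd p hp)]

/-- if `ρ ∈ C²(Ω)` has `ρ_x² − ρ_t² ≠ 0`, `s ∈ C¹(ℝ)` satisfies
`s(ρ) = (ρ_xx − ρ_tt)/(ρ_x² − ρ_t²)` on `Ω` and `S` is an antiderivative of `s`, then
`Φ = j·e^{−S(ρ)}·ρ_z` satisfies `∂_z̄Φ = 0` on `Ω` (it is hyperbolic analytic). -/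
theorem Phi_is_hyperbolic_analytic (Ω : Set Hyp) (hΩ : IsOpen Ω)
    (ρ : Hyp → ℝ) (hρ : ContDiffOn ℝ 2 ρ Ω)
    (hnd : ∀ p ∈ Ω, (pdx ρ p) ^ 2 - (pdt ρ p) ^ 2 ≠ 0)
    (s S : ℝ → ℝ) (hs : ContDiff ℝ 1 s)
    (hsρ : ∀ p ∈ Ω, s (ρ p) = waveOp ρ p / ((pdx ρ p) ^ 2 - (pdt ρ p) ^ 2))
    (hS : ∀ x : ℝ, HasDerivAt S (s x) x)
    (Φ : Hyp → Hyp)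
    (hΦ : ∀ p, Φ p = ((Real.exp (-S (ρ p)) * (pdt ρ p / 2),
      Real.exp (-S (ρ p)) * (pdx ρ p / 2)) : Hyp)) :
    ∀ p ∈ Ω, dzbar Φ p = 0 :=
  Phi_is_hyperbolic_analytic_general Ω hΩ ρ hρ hnd s S hsρ hS Φ hΦ
end
end
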